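/- arXiv:1002.2890 — 2 statements merged into one kernel-verified Lean document; each statement's English description precedes it below -/
import Mathlib

section
/- Let A be a real n×n matrix and B a real n×d matrix such that Rank(B, AB, …, A^{m−1}B) = n for some m ≥ 1. Then there exists t > 0 such that for all 0 ≤ s₁ < s₂ < ⋯ < s_m ≤ t, Rank(e^{s₁A}B, e^{s₂A}B, …, e^{s_mA}B) = n. -/
/-!
If the conclusion failed, then for every `t > 0` some unit row vector `v` would annihilate
`e^{s_i A} B` at `m` distinct times `s_i ∈ [0, t]`. Each entry of `ξ ↦ v A^j e^{ξA} B` is the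
`j`-th derivative of the corresponding entry of `ξ ↦ v e^{ξA} B`, so by Rolle's theorem it vanishes
somewhere in `[0, t]` for every `j < m`. Letting `t → 0` along a convergent subsequence of the
vectors `v` yields a unit vector with `v A^j B = 0` for all `j < m`, contradicting the Kalman rank
condition.
-/

open Matrix Set Filter Topology NormedSpace

theorem Matrix.rank_eq_card_iff_forall_vecMul_eq_zero {R m n : Type*} [Field R] [Fintype m]
    [Fintype n] (M : Matrix m n R) : M.rank = Fintype.card m ↔ ∀ v, v ᵥ* M = 0 → v = 0 := by
  rw [rank_eq_finrank_span_row, ← Set.finrank, eq_comm,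
    ← linearIndependent_iff_card_eq_finrank_span,
    ← vecMul_injective_iff, ← coe_vecMulLinear, injective_iff_map_eq_zero]
  rfl

theorem Matrix.vecMul_of_blocks_eq_zero_iff {R ι κ l : Type*} [CommSemiring R] [Fintype ι]
    (M : l → Matrix ι κ R) (v : ι → R) :
    v ᵥ* Matrix.of (fun i (p : l × κ) => M p.1 i p.2) = 0 ↔ ∀ k, v ᵥ* M k = 0 := by
  simp only [funext_iff, Prod.forall]
  rfl

theorem exists_mem_Icc_eq_zero_of_hasDerivAt_succ {f : ℕ → ℝ → ℝ}
    (hf : ∀ j x, HasDerivAt (f j) (f (j + 1) x) x) {k : ℕ} {s : Fin (k + 1) → ℝ}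
    (hs : StrictMono s) (hzero : ∀ i, f 0 (s i) = 0) :
    ∃ ξ ∈ Icc (s 0) (s (Fin.last k)), f k ξ = 0 := by
  induction k generalizing f with
  | zero => exact ⟨s 0, left_mem_Icc.2 le_rfl, hzero 0⟩
  | succ k ih =>
    have rolle : ∀ i : Fin (k + 1), ∃ r ∈ Ioo (s i.castSucc) (s i.succ), f 1 r = 0 := fun i =>
      exists_hasDerivAt_eq_zero (hs Fin.castSucc_lt_succ)
        (HasDerivAt.continuousOn fun x _ => hf 0 x)
        (by rw [hzero, hzero]) fun x _ => hf 0 x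
    choose r hr hr_zero using rolle
    have hr_mono : StrictMono r := Fin.strictMono_iff_lt_succ.2 fun i =>
      calc r i.castSucc < s i.castSucc.succ := (hr _).2
        _ = s i.succ.castSucc := by rw [Fin.succ_castSucc]
        _ < r i.succ := (hr _).1
    obtain ⟨ξ, ⟨hξ₀, hξ₁⟩, hξ⟩ := ih (f := fun j => f (j + 1)) (fun j x => hf (j + 1) x)
      hr_mono hr_zero
    refine ⟨ξ, ⟨?_, ?_⟩, hξ⟩
    · simpa using (hr 0).1.le.trans hξ₀
    · simpa using hξ₁.trans (hr (Fin.last k)).2.le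

theorem IsCompact.exists_forall_mk_zero_mem_of_forall_pos {X ι : Type*} [TopologicalSpace X]
    [FirstCountableTopology X] {K : Set X} (hK : IsCompact K) {S : ι → Set (X × ℝ)}
    (hS : ∀ i, IsClosed (S i)) (h : ∀ t > 0, ∃ x ∈ K, ∀ i, ∃ ξ ∈ Icc 0 t, (x, ξ) ∈ S i) :
    ∃ x ∈ K, ∀ i, (x, 0) ∈ S i := by
  choose x hxK hx using fun k : ℕ => h (1 / (k + 1)) Nat.one_div_pos_of_nat
  obtain ⟨a, haK, φ, hφ, hxa⟩ := hK.tendsto_subseq hxK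
  refine ⟨a, haK, fun i => ?_⟩
  choose ξ hξ hξS using fun k => hx k i
  have hξ_lim : Tendsto (ξ ∘ φ) atTop (𝓝 0) :=
    squeeze_zero (fun k => (hξ (φ k)).1) (fun k => (hξ (φ k)).2)
      (tendsto_one_div_add_atTop_nhds_zero_nat.comp hφ.tendsto_atTop)
  exact (hS i).mem_of_tendsto (hxa.prodMk_nhds hξ_lim) (Eventually.of_forall fun k => hξS (φ k))

section MatrixExp

-- Any matrix norm would do: it only serves to make the calculus of `exp` available.
attribute [local instance] Matrix.linftyOpNormedRing Matrix.linftyOpNormedAlgebra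

variable {ι κ : Type*} [Fintype ι] [DecidableEq ι]

theorem Matrix.hasDerivAt_vecMul_pow_mul_exp_smul_mul (A : Matrix ι ι ℝ) (B : Matrix ι κ ℝ)
    (v : ι → ℝ) (c : κ) (j : ℕ) (ξ : ℝ) :
    HasDerivAt (fun ξ : ℝ => (v ᵥ* (A ^ j * exp (ξ • A) * B)) c)
      ((v ᵥ* (A ^ (j + 1) * exp (ξ • A) * B)) c) ξ := by
  let L : Matrix ι ι ℝ →ₗ[ℝ] ℝ :=
    { toFun := fun E => (v ᵥ* (A ^ j * E * B)) c
      map_add' := by intros; simp [Matrix.mul_add, Matrix.add_mul, Matrix.vecMul_add]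
      map_smul' := by intros; simp [Matrix.vecMul_smul] }
  refine (L.toContinuousLinearMap.hasFDerivAt.comp_hasDerivAt ξ
    (hasDerivAt_exp_smul_const' A ξ)).congr_deriv ?_
  show (v ᵥ* (A ^ j * (A * exp (ξ • A)) * B)) c = _
  simp only [pow_succ, Matrix.mul_assoc]

theorem Matrix.continuous_vecMul_pow_mul_exp_smul_mul (A : Matrix ι ι ℝ) (B : Matrix ι κ ℝ)
    (j : ℕ) (c : κ) :
    Continuous fun q : (ι → ℝ) × ℝ => (q.1 ᵥ* (A ^ j * exp (q.2 • A) * B)) c := by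
  have := (differentiable_exp_smul_const ℝ A).continuous
  fun_prop

end MatrixExp

theorem Matrix.exists_mem_Icc_vecMul_pow_mul_exp_smul_mul_eq_zero {ι κ : Type*} [Fintype ι]
    [DecidableEq ι] (A : Matrix ι ι ℝ) (B : Matrix ι κ ℝ) {v : ι → ℝ} {m : ℕ} {s : Fin m → ℝ}
    {a b : ℝ} (hs : StrictMono s) (hsab : ∀ i, s i ∈ Icc a b)
    (hv : ∀ i, v ᵥ* (exp (s i • A) * B) = 0) {j : ℕ} (hj : j < m) (c : κ) :
    ∃ ξ ∈ Icc a b, (v ᵥ* (A ^ j * exp (ξ • A) * B)) c = 0 := by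
  obtain ⟨ξ, ⟨hξa, hξb⟩, hξ⟩ := exists_mem_Icc_eq_zero_of_hasDerivAt_succ
    (f := fun j ξ => (v ᵥ* (A ^ j * exp (ξ • A) * B)) c)
    (hasDerivAt_vecMul_pow_mul_exp_smul_mul A B v c) (hs.comp (Fin.strictMono_castLE hj))
    (fun i => by simpa using congrFun (hv _) c)
  exact ⟨ξ, ⟨(hsab _).1.trans hξa, hξb.trans (hsab _).2⟩, hξ⟩

theorem kalman_rank_exp_general {n d m : ℕ}
    (A : Matrix (Fin n) (Fin n) ℝ) (B : Matrix (Fin n) (Fin d) ℝ)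
    (hrank : (Matrix.of fun (i : Fin n) (p : Fin m × Fin d) =>
      ((A ^ (p.1 : ℕ)) * B) i p.2).rank = n) :
    ∃ t : ℝ, 0 < t ∧ ∀ s : Fin m → ℝ, StrictMono s → (∀ i, 0 ≤ s i) → (∀ i, s i ≤ t) →
      (Matrix.of fun (i : Fin n) (p : Fin m × Fin d) =>
        ((NormedSpace.exp (s p.1 • A)) * B) i p.2).rank = n := by
  by_contra! hcon
  obtain ⟨v, hv, hvK⟩ : ∃ v ∈ Metric.sphere (0 : Fin n → ℝ) 1, ∀ p : Fin m × Fin d,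
      (v, (0 : ℝ)) ∈ {q : (Fin n → ℝ) × ℝ |
        (q.1 ᵥ* (A ^ (p.1 : ℕ) * exp (q.2 • A) * B)) p.2 = 0} := by
    refine (isCompact_sphere 0 1).exists_forall_mk_zero_mem_of_forall_pos
      (fun p => isClosed_eq (continuous_vecMul_pow_mul_exp_smul_mul A B _ _) continuous_const)
      fun t ht => ?_
    obtain ⟨s, hs, hs0, hst, hrk⟩ := hcon t ht
    obtain ⟨w, hw, hw0⟩ : ∃ w : Fin n → ℝ, w ᵥ* _ = 0 ∧ w ≠ 0 := by
      by_contra! h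
      exact hrk (by simpa using (rank_eq_card_iff_forall_vecMul_eq_zero _).2 h)
    replace hw := (vecMul_of_blocks_eq_zero_iff (fun k => exp (s k • A) * B) w).1 hw
    refine ⟨‖w‖⁻¹ • w, mem_sphere_zero_iff_norm.2 (norm_smul_inv_norm hw0), fun p => ?_⟩
    exact exists_mem_Icc_vecMul_pow_mul_exp_smul_mul_eq_zero (v := ‖w‖⁻¹ • w) A B hs
      (fun i => ⟨hs0 i, hst i⟩) (fun k => by rw [smul_vecMul, hw, smul_zero]) p.1.isLt p.2
  refine Metric.ne_of_mem_sphere hv one_ne_zero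
    ((rank_eq_card_iff_forall_vecMul_eq_zero _).1 (by simpa using hrank) v ?_)
  exact (vecMul_of_blocks_eq_zero_iff (fun k : Fin m => A ^ (k : ℕ) * B) v).2 fun k =>
    funext fun c => by simpa using hvK (k, c)

/-- Lemma 5.2 of the paper. If the Kalman rank condition
`Rank(B, AB, …, A^{m−1}B) = n` holds for some `m ≥ 1`, then there exists `t > 0` such that
for all `0 ≤ s₁ < s₂ < ⋯ < s_m ≤ t` the block matrix
`(e^{s₁A}B, …, e^{s_mA}B)` has rank `n`. -/
theorem kalman_rank_exp {n d m : ℕ} (hm : 1 ≤ m)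
    (A : Matrix (Fin n) (Fin n) ℝ) (B : Matrix (Fin n) (Fin d) ℝ)
    (hrank : (Matrix.of fun (i : Fin n) (p : Fin m × Fin d) =>
      ((A ^ (p.1 : ℕ)) * B) i p.2).rank = n) :
    ∃ t : ℝ, 0 < t ∧ ∀ s : Fin m → ℝ, StrictMono s → (∀ i, 0 ≤ s i) → (∀ i, s i ≤ t) →
      (Matrix.of fun (i : Fin n) (p : Fin m × Fin d) =>
        ((NormedSpace.exp (s p.1 • A)) * B) i p.2).rank = n :=
  kalman_rank_exp_general A B hrank
end

section
/- Let ν be a probability measure on ℝ with ∫ z ν(dz) = 0, ∫ z² ν(dz) = 1, and ∫ |z|³ ν(dz) < ∞. Let X_t = Σ_{i=1}^{N_t} ξ_i where N_t is a rate-1 Poisson process and ξ_i are i.i.d. with law ν, independent of N. Suppose the Berry–Esseen bound sup_{r∈ℝ} |P(X_t < r√t) − Φ(r)| ≤ c₀/√t holds for some c₀ > 0 and all t > 0, where Φ is the standard normal CDF. Then there exist constants c₁ > 0 such that for all x ∈ ℝ and t ≥ x², the total variation distance between the laws of x + X_t and X_t is at least (c₁|x| − 4c₀)/√t. -/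
open MeasureTheory ENNReal

/-- The standard Gaussian distribution function `Φ`. -/
noncomputable def stdGaussianCDF (r : ℝ) : ℝ :=
  ∫ u in Set.Iio r, Real.exp (-u ^ 2 / 2) / Real.sqrt (2 * Real.pi)

/-- The total variation norm `‖μ − ν‖_var` of the difference of two (finite) measures. -/
noncomputable def tvDist {α : Type*} [MeasurableSpace α] (μ ν : Measure α) : ℝ≥0∞ :=
  ⨆ s : Set α, (μ s - ν s) + (ν sᶜ - μ sᶜ)

/-! Testing the two laws on a half-line bounds the total variation distance below by twice
the increment of the distribution function of `X t` over `[b₀ t, b₀ t + |x|)`. By the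
Berry–Esseen bound, applied at `r = |x|/√t` and `r = 0`, this increment is within `2c₀/√t`
of `Φ(|x|/√t) − Φ(0)`; since the Gaussian density exceeds `1/6` on `[-1, 1]` and
`|x| ≤ √t`, that Gaussian increment is at least `|x|/(6√t)`. -/

section TotalVariation

variable {α : Type*} [MeasurableSpace α] {μ ν : Measure α}
  [IsProbabilityMeasure μ] [IsProbabilityMeasure ν] {s : Set α}

lemma ofReal_two_mul_measureReal_sub_le_tvDist (hs : MeasurableSet s) :
    ENNReal.ofReal (2 * (μ.real s - ν.real s)) ≤ tvDist μ ν := by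
  have hsplit :
      2 * (μ.real s - ν.real s) = (μ.real s - ν.real s) + (ν.real sᶜ - μ.real sᶜ) := by
    rw [probReal_compl_eq_one_sub hs, probReal_compl_eq_one_sub hs]
    ring
  have hsub : ∀ (ρ σ : Measure α) [IsFiniteMeasure ρ] [IsFiniteMeasure σ] (u : Set α),
      ENNReal.ofReal (ρ.real u - σ.real u) = ρ u - σ u := fun ρ σ _ _ u => by
    rw [ENNReal.ofReal_sub _ measureReal_nonneg, measureReal_def, measureReal_def,
      ofReal_toReal (measure_ne_top ρ u), ofReal_toReal (measure_ne_top σ u)]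
  calc ENNReal.ofReal (2 * (μ.real s - ν.real s))
      ≤ ENNReal.ofReal (μ.real s - ν.real s) + ENNReal.ofReal (ν.real sᶜ - μ.real sᶜ) :=
        hsplit ▸ ENNReal.ofReal_add_le
    _ = (μ s - ν s) + (ν sᶜ - μ sᶜ) := by rw [hsub, hsub]
    _ ≤ tvDist μ ν := le_iSup (fun s : Set α => (μ s - ν s) + (ν sᶜ - μ sᶜ)) s

lemma ofReal_two_mul_abs_measureReal_sub_le_tvDist (hs : MeasurableSet s) :
    ENNReal.ofReal (2 * |μ.real s - ν.real s|) ≤ tvDist μ ν := by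
  rcases abs_cases (μ.real s - ν.real s) with ⟨habs, -⟩ | ⟨habs, -⟩
  · rw [habs]
    exact ofReal_two_mul_measureReal_sub_le_tvDist hs
  · have hcompl : -(μ.real s - ν.real s) = μ.real sᶜ - ν.real sᶜ := by
      rw [probReal_compl_eq_one_sub hs, probReal_compl_eq_one_sub hs]
      ring
    rw [habs, hcompl]
    exact ofReal_two_mul_measureReal_sub_le_tvDist hs.compl

end TotalVariation

lemma measureReal_map_const_add_Iio {Ω : Type*} [MeasurableSpace Ω] (P : Measure Ω)
    {Y : Ω → ℝ} (hY : Measurable Y) (x c : ℝ) :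
    (Measure.map (fun ω => x + Y ω) P).real (Set.Iio c) = P.real {ω | Y ω < c - x} := by
  rw [map_measureReal_apply (hY.const_add x) measurableSet_Iio]
  congr 1
  ext ω
  simp only [Set.mem_preimage, Set.mem_Iio, Set.mem_ofPred_eq]
  constructor <;> intro h <;> linarith

lemma ofReal_two_mul_abs_sub_le_tvDist_map_const_add {Ω : Type*} [MeasurableSpace Ω]
    (P : Measure Ω) [IsProbabilityMeasure P] {Y : Ω → ℝ} (hY : Measurable Y) (x a : ℝ) :
    ENNReal.ofReal (2 * |P.real {ω | Y ω < a + |x|} - P.real {ω | Y ω < a}|) ≤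
      tvDist (Measure.map (fun ω => x + Y ω) P) (Measure.map Y P) := by
  have := Measure.isProbabilityMeasure_map (μ := P) (hY.const_add x).aemeasurable
  have := Measure.isProbabilityMeasure_map (μ := P) hY.aemeasurable
  have hmap := measureReal_map_const_add_Iio P hY x
  have hmap₀ : ∀ c, (Measure.map Y P).real (Set.Iio c) = P.real {ω | Y ω < c} := by
    simpa using measureReal_map_const_add_Iio P hY 0
  rcases le_or_gt 0 x with hx | hx
  · convert ofReal_two_mul_abs_measureReal_sub_le_tvDist
      (μ := Measure.map (fun ω => x + Y ω) P) (ν := Measure.map Y P)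
      (measurableSet_Iio (a := a + x)) using 3
    rw [hmap, hmap₀, abs_of_nonneg hx, add_sub_cancel_right, abs_sub_comm]
  · convert ofReal_two_mul_abs_measureReal_sub_le_tvDist
      (μ := Measure.map (fun ω => x + Y ω) P) (ν := Measure.map Y P)
      (measurableSet_Iio (a := a)) using 3
    rw [hmap, hmap₀, abs_of_neg hx, ← sub_eq_add_neg]

lemma integrable_stdGaussian_density :
    Integrable (fun u : ℝ => Real.exp (-u ^ 2 / 2) / Real.sqrt (2 * Real.pi)) := by
  have h := (integrable_exp_neg_mul_sq (b := 1 / 2) (by norm_num)).div_const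
    (Real.sqrt (2 * Real.pi))
  refine h.congr (Filter.Eventually.of_forall fun u => ?_)
  ring_nf

lemma stdGaussian_density_ge {u : ℝ} (hu : |u| ≤ 1) :
    1 / 6 ≤ Real.exp (-u ^ 2 / 2) / Real.sqrt (2 * Real.pi) := by
  have hexp : 1 / 2 ≤ Real.exp (-u ^ 2 / 2) := by
    have hu2 : u ^ 2 ≤ 1 := by nlinarith [abs_nonneg u, sq_abs u]
    linarith [Real.add_one_le_exp (-u ^ 2 / 2)]
  have hsqrt : Real.sqrt (2 * Real.pi) ≤ 3 :=
    Real.sqrt_le_iff.mpr ⟨by norm_num, by nlinarith [Real.pi_lt_d2]⟩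
  have hsqrt₀ : 0 < Real.sqrt (2 * Real.pi) := by positivity
  rw [le_div_iff₀ hsqrt₀]
  linarith

lemma stdGaussianCDF_sub_eq_integral {a b : ℝ} (hab : a ≤ b) :
    stdGaussianCDF b - stdGaussianCDF a =
      ∫ u in Set.Ico a b, Real.exp (-u ^ 2 / 2) / Real.sqrt (2 * Real.pi) := by
  rw [stdGaussianCDF, stdGaussianCDF, ← Set.Iio_union_Ico_eq_Iio hab,
    setIntegral_union (Set.Iio_disjoint_Ici le_rfl |>.mono_right Set.Ico_subset_Ici_self)
      measurableSet_Ico integrable_stdGaussian_density.integrableOn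
      integrable_stdGaussian_density.integrableOn]
  ring

lemma stdGaussianCDF_sub_ge {a b : ℝ} (ha : -1 ≤ a) (hab : a ≤ b) (hb : b ≤ 1) :
    (b - a) / 6 ≤ stdGaussianCDF b - stdGaussianCDF a := by
  rw [stdGaussianCDF_sub_eq_integral hab]
  calc (b - a) / 6 = ∫ _ in Set.Ico a b, (1 / 6 : ℝ) := by
        rw [setIntegral_const, measureReal_def, Real.volume_Ico,
          ENNReal.toReal_ofReal (by linarith), smul_eq_mul]
        ring
    _ ≤ _ := by
        refine setIntegral_mono_on (integrableOn_const (by simp))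
          integrable_stdGaussian_density.integrableOn measurableSet_Ico fun u hu => ?_
        exact stdGaussian_density_ge (abs_le.mpr ⟨by linarith [hu.1], by linarith [hu.2]⟩)

theorem tv_lower_bound_berry_esseen_general
    {Ω : Type*} [MeasurableSpace Ω] (P : Measure Ω) [IsProbabilityMeasure P]
    (X : ℝ → Ω → ℝ) (hX : ∀ t, Measurable (X t)) (b₀ : ℝ)
    (c₀ : ℝ)
    (hBE : ∀ t : ℝ, 0 < t → ∀ r : ℝ,
      |(P {ω | X t ω < r * Real.sqrt t + b₀ * t}).toReal - stdGaussianCDF r| ≤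
        c₀ / Real.sqrt t) :
    ∃ c₁ : ℝ, 0 < c₁ ∧ ∀ x t : ℝ, x ^ 2 ≤ t →
      ENNReal.ofReal ((c₁ * |x| - 4 * c₀) / Real.sqrt t) ≤
        tvDist (Measure.map (fun ω => x + X t ω) P) (Measure.map (X t) P) := by
  refine ⟨1 / 3, by norm_num, fun x t hxt => ?_⟩
  rcases (le_trans (sq_nonneg x) hxt).eq_or_lt with rfl | ht
  · simp
  have hst : 0 < Real.sqrt t := Real.sqrt_pos.mpr ht
  set δ := |x| / Real.sqrt t
  have hδt : δ * Real.sqrt t = |x| := div_mul_cancel₀ _ hst.ne'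
  have hδ₀ : 0 ≤ δ := by positivity
  have hδ₁ : δ ≤ 1 := div_le_one_of_le₀ (Real.abs_le_sqrt hxt) hst.le
  have hBE_δ := abs_le.mp (hBE t ht δ)
  have hBE_0 := abs_le.mp (hBE t ht 0)
  rw [hδt] at hBE_δ
  rw [zero_mul, zero_add] at hBE_0
  have hΦ := stdGaussianCDF_sub_ge (by linarith) hδ₀ hδ₁
  rw [sub_zero] at hΦ
  set F := fun c => P.real {ω | X t ω < c}
  have hincr : δ / 6 - 2 * (c₀ / Real.sqrt t) ≤ F (b₀ * t + |x|) - F (b₀ * t) := by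
    simp only [F, measureReal_def, add_comm (b₀ * t)]
    linarith
  calc ENNReal.ofReal ((1 / 3 * |x| - 4 * c₀) / Real.sqrt t)
      = ENNReal.ofReal (2 * (δ / 6 - 2 * (c₀ / Real.sqrt t))) := by
        congr 1
        field_simp
        linear_combination (-6) * hδt
    _ ≤ ENNReal.ofReal (2 * |F (b₀ * t + |x|) - F (b₀ * t)|) :=
        ENNReal.ofReal_le_ofReal (by linarith [le_abs_self (F (b₀ * t + |x|) - F (b₀ * t))])
    _ ≤ _ := ofReal_two_mul_abs_sub_le_tvDist_map_const_add P (hX t) x (b₀ * t)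

/-- Let `X_t` be a compound Poisson process (with drift `b₀`) whose jump
distribution has zero mean, unit variance and finite third moment, and suppose the
Berry–Esseen bound `sup_r |P(X_t < r√t + b₀t) − Φ(r)| ≤ c₀/√t` holds. Then there is
`c₁ > 0` such that for all `x` and `t ≥ x²`, the total variation distance between the laws
of `x + X_t` and `X_t` is at least `(c₁|x| − 4c₀)/√t`. -/
theorem tv_lower_bound_berry_esseen
    {Ω : Type*} [MeasurableSpace Ω] (P : Measure Ω) [IsProbabilityMeasure P]
    (X : ℝ → Ω → ℝ) (hX : ∀ t, Measurable (X t)) (b₀ : ℝ)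
    (c₀ : ℝ) (hc₀ : 0 < c₀)
    (hBE : ∀ t : ℝ, 0 < t → ∀ r : ℝ,
      |(P {ω | X t ω < r * Real.sqrt t + b₀ * t}).toReal - stdGaussianCDF r| ≤
        c₀ / Real.sqrt t) :
    ∃ c₁ : ℝ, 0 < c₁ ∧ ∀ x t : ℝ, x ^ 2 ≤ t →
      ENNReal.ofReal ((c₁ * |x| - 4 * c₀) / Real.sqrt t) ≤
        tvDist (Measure.map (fun ω => x + X t ω) P) (Measure.map (X t) P) :=
  tv_lower_bound_berry_esseen_general P X hX b₀ c₀ hBE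
end
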